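/- arXiv:1501.00671 — 6 statements merged into one kernel-verified Lean document; each statement's English description precedes it below -/
import Mathlib

section
/- Let f = g·h and f = u·v be two nontrivial variable-disjoint factorizations of a polynomial f in F⟨X⟩ (i.e., Var(g) ∩ Var(h) = ∅ and Var(u) ∩ Var(v) = ∅, with all four factors of positive degree). Then either Var(g) ⊆ Var(u) and Var(v) ⊆ Var(h), or Var(u) ⊆ Var(g) and Var(h) ⊆ Var(v). -/
/-- Degree of a noncommutative polynomial: max length of a monomial with nonzero coefficient. -/
noncomputable def deg {F X : Type} [Field F] (f : MonoidAlgebra F (FreeMonoid X)) : Nat :=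
  f.coeff.support.sup FreeMonoid.length

/-- Set of variables occurring in nonzero monomials of `f`. -/
def vars {F X : Type} [Field F] (f : MonoidAlgebra F (FreeMonoid X)) : Set X :=
  {x | ∃ m ∈ f.coeff.support, x ∈ FreeMonoid.toList m}

/-- `f` is irreducible: no factorization into two factors of positive degree. -/
def Irred {F X : Type} [Field F] (f : MonoidAlgebra F (FreeMonoid X)) : Prop :=
  ¬ ∃ g h : MonoidAlgebra F (FreeMonoid X), f = g * h ∧ 0 < deg g ∧ 0 < deg h

/-- `f` is variable-disjoint irreducible. -/
def VDIrred {F X : Type} [Field F] (f : MonoidAlgebra F (FreeMonoid X)) : Prop :=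
  ¬ ∃ g h : MonoidAlgebra F (FreeMonoid X),
      f = g * h ∧ 0 < deg g ∧ 0 < deg h ∧ vars g ∩ vars h = ∅

/-- `f` is homogeneous of degree `d`. -/
def Homog {F X : Type} [Field F] (f : MonoidAlgebra F (FreeMonoid X)) (d : Nat) : Prop :=
  ∀ m ∈ f.coeff.support, FreeMonoid.length m = d

/-!
If `Var(g) ∩ Var(h) = ∅`, a word `m * n` with `m ∈ supp g`, `n ∈ supp h` splits in only one
way into a word of `g` followed by a word of `h`, so its coefficient in `g * h` is
`g.coeff m * h.coeff n ≠ 0`. Hence `Var(g * h) = Var(g) ∪ Var(h)`, and every such `m * n` is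
also a product `p * q` of words of `u` and `v`. Comparing the two cut points, either `m` is a
prefix of `p` or `n` is a suffix of `q`. So if some variable `x` lies in both `Var(g)` and
`Var(v)`, no variable `y` can lie in both `Var(h)` and `Var(u)`: with `x ∈ m`, `y ∈ n` the first
case puts `x` into `Var(u)`, the second puts `y` into `Var(v)`. Either way one of the two
"crossed" intersections is empty, and the inclusions follow from
`Var(g) ∪ Var(h) = Var(u) ∪ Var(v)`.
-/
theorem List.subset_and_subset_or_of_append_eq_append {α : Type*} {a b c d : List α}
    (h : a ++ b = c ++ d) : (a ⊆ c ∧ d ⊆ b) ∨ (c ⊆ a ∧ b ⊆ d) := by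
  rcases List.append_eq_append_iff.mp h with ⟨s, rfl, rfl⟩ | ⟨s, rfl, rfl⟩
  · exact .inl ⟨List.subset_append_left _ _, List.subset_append_right _ _⟩
  · exact .inr ⟨List.subset_append_left _ _, List.subset_append_right _ _⟩

theorem List.eq_and_eq_of_append_eq_append_of_disjoint {α : Type*} {a b c d : List α}
    (h : a ++ b = c ++ d) (hcb : c.Disjoint b) (had : a.Disjoint d) : a = c ∧ b = d := by
  rcases List.append_eq_append_iff.mp h with ⟨s, rfl, rfl⟩ | ⟨s, rfl, rfl⟩
  · obtain rfl : s = [] := List.eq_nil_iff_forall_not_mem.mpr fun x hx =>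
      hcb (List.mem_append_right _ hx) (List.mem_append_left _ hx)
    simp
  · obtain rfl : s = [] := List.eq_nil_iff_forall_not_mem.mpr fun x hx =>
      had (List.mem_append_right _ hx) (List.mem_append_left _ hx)
    simp

section Vars

variable {F X : Type} [Field F] {g h u v : MonoidAlgebra F (FreeMonoid X)}

theorem ne_zero_of_deg_pos (hg : 0 < deg g) : g ≠ 0 := by
  rintro rfl
  simp [deg] at hg

theorem uniqueMul_support_of_disjoint_vars (hd : Disjoint (vars g) (vars h))
    {m n : FreeMonoid X} (hm : m ∈ g.coeff.support) (hn : n ∈ h.coeff.support) :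
    UniqueMul g.coeff.support h.coeff.support m n := by
  intro a b ha hb hab
  have hlist : a.toList ++ b.toList = m.toList ++ n.toList := by
    rw [← FreeMonoid.toList_mul, ← FreeMonoid.toList_mul, hab]
  obtain ⟨ham, hbn⟩ := List.eq_and_eq_of_append_eq_append_of_disjoint hlist
    (fun x hxm hxb => Set.disjoint_left.mp hd ⟨m, hm, hxm⟩ ⟨b, hb, hxb⟩)
    (fun x hxa hxn => Set.disjoint_left.mp hd ⟨a, ha, hxa⟩ ⟨n, hn, hxn⟩)
  exact ⟨FreeMonoid.toList.injective ham, FreeMonoid.toList.injective hbn⟩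

theorem mul_mem_support_mul_of_disjoint_vars (hd : Disjoint (vars g) (vars h))
    {m n : FreeMonoid X} (hm : m ∈ g.coeff.support) (hn : n ∈ h.coeff.support) :
    m * n ∈ (g * h).coeff.support := by
  rw [Finsupp.mem_support_iff,
    MonoidAlgebra.coeff_mul_mul_of_uniqueMul (uniqueMul_support_of_disjoint_vars hd hm hn)]
  exact mul_ne_zero (Finsupp.mem_support_iff.mp hm) (Finsupp.mem_support_iff.mp hn)

theorem vars_mul_subset (g h : MonoidAlgebra F (FreeMonoid X)) :
    vars (g * h) ⊆ vars g ∪ vars h := by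
  classical
  rintro x ⟨w, hw, hxw⟩
  obtain ⟨m, hm, n, hn, rfl⟩ :=
    Finset.mem_mul.mp (MonoidAlgebra.support_coeff_mul_subset g h hw)
  rw [FreeMonoid.toList_mul, List.mem_append] at hxw
  exact hxw.imp (fun hx => ⟨m, hm, hx⟩) (fun hx => ⟨n, hn, hx⟩)

theorem vars_left_subset_vars_mul (hd : Disjoint (vars g) (vars h)) (hh : h ≠ 0) :
    vars g ⊆ vars (g * h) := by
  rintro x ⟨m, hm, hxm⟩
  obtain ⟨n, hn⟩ := Finsupp.support_nonempty_iff.mpr (MonoidAlgebra.coeff_eq_zero.not.mpr hh)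
  exact ⟨m * n, mul_mem_support_mul_of_disjoint_vars hd hm hn,
    FreeMonoid.toList_mul m n ▸ List.mem_append_left _ hxm⟩

theorem vars_right_subset_vars_mul (hd : Disjoint (vars g) (vars h)) (hg : g ≠ 0) :
    vars h ⊆ vars (g * h) := by
  rintro x ⟨n, hn, hxn⟩
  obtain ⟨m, hm⟩ := Finsupp.support_nonempty_iff.mpr (MonoidAlgebra.coeff_eq_zero.not.mpr hg)
  exact ⟨m * n, mul_mem_support_mul_of_disjoint_vars hd hm hn,
    FreeMonoid.toList_mul m n ▸ List.mem_append_right _ hxn⟩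

theorem disjoint_vars_of_mul_eq_mul_of_not_disjoint (heq : g * h = u * v)
    (hgh : Disjoint (vars g) (vars h)) (huv : Disjoint (vars u) (vars v))
    (hgv : ¬ Disjoint (vars g) (vars v)) : Disjoint (vars h) (vars u) := by
  classical
  obtain ⟨x, ⟨m, hm, hxm⟩, hxv⟩ := Set.not_disjoint_iff.mp hgv
  refine Set.disjoint_left.mpr fun y ⟨n, hn, hyn⟩ hyu => ?_
  have hmn : m * n ∈ (u * v).coeff.support :=
    heq ▸ mul_mem_support_mul_of_disjoint_vars hgh hm hn
  obtain ⟨p, hp, q, hq, hpq⟩ :=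
    Finset.mem_mul.mp (MonoidAlgebra.support_coeff_mul_subset u v hmn)
  have hlist : m.toList ++ n.toList = p.toList ++ q.toList := by
    rw [← FreeMonoid.toList_mul, ← FreeMonoid.toList_mul, hpq]
  rcases List.subset_and_subset_or_of_append_eq_append hlist with ⟨hmp, -⟩ | ⟨-, hnq⟩
  · exact Set.disjoint_left.mp huv ⟨p, hp, hmp hxm⟩ hxv
  · exact Set.disjoint_left.mp huv hyu ⟨q, hq, hnq hyn⟩

theorem vars_subset_of_mul_eq_mul_of_disjoint (heq : g * h = u * v)
    (hgh : Disjoint (vars g) (vars h)) (huv : Disjoint (vars u) (vars v))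
    (hh : h ≠ 0) (hu : u ≠ 0) (hgv : Disjoint (vars g) (vars v)) :
    vars g ⊆ vars u ∧ vars v ⊆ vars h := by
  have hg : vars g ⊆ vars u ∪ vars v :=
    (vars_left_subset_vars_mul hgh hh).trans (heq ▸ vars_mul_subset u v)
  have hv : vars v ⊆ vars g ∪ vars h :=
    (vars_right_subset_vars_mul huv hu).trans (heq ▸ vars_mul_subset g h)
  exact ⟨Disjoint.subset_left_of_subset_union hg hgv,
    Disjoint.subset_right_of_subset_union hv hgv.symm⟩

end Vars

theorem stmt5 {F X : Type} [Field F] (f g h u v : MonoidAlgebra F (FreeMonoid X))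
    (h1 : f = g * h) (h2 : f = u * v)
    (hd1 : vars g ∩ vars h = ∅) (hd2 : vars u ∩ vars v = ∅)
    (hg : 0 < deg g) (hh : 0 < deg h) (hu : 0 < deg u) (hv : 0 < deg v) :
    (vars g ⊆ vars u ∧ vars v ⊆ vars h) ∨ (vars u ⊆ vars g ∧ vars h ⊆ vars v) := by
  rw [← Set.disjoint_iff_inter_eq_empty] at hd1 hd2
  have heq : g * h = u * v := h1.symm.trans h2
  by_cases hgv : Disjoint (vars g) (vars v)
  · exact .inl <| vars_subset_of_mul_eq_mul_of_disjoint heq hd1 hd2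
      (ne_zero_of_deg_pos hh) (ne_zero_of_deg_pos hu) hgv
  · exact .inr <| vars_subset_of_mul_eq_mul_of_disjoint heq.symm hd2 hd1
      (ne_zero_of_deg_pos hv) (ne_zero_of_deg_pos hg)
      (disjoint_vars_of_mul_eq_mul_of_not_disjoint heq hd1 hd2 hgv).symm
end

section
/- Let f ∈ F⟨X⟩ and suppose f = g·h and f = u·v are two nontrivial variable-disjoint factorizations of f such that Var(g) = Var(u). Then there exist nonzero scalars α, β ∈ F with g = α·u and h = β·v. -/
namespace FreeMonoid

variable {X : Type}

def wordsOver (A : Set X) : Set (FreeMonoid X) :=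
  {m | ∀ x ∈ m.toList, x ∈ A}

lemma wordsOver_mono {A B : Set X} (hAB : A ⊆ B) : wordsOver A ⊆ wordsOver B :=
  fun _ hm x hx => hAB (hm x hx)

open Classical in
lemma takeWhile_toList_mul_of_disjoint {A B : Set X} (hAB : Disjoint A B) {a b : FreeMonoid X}
    (ha : a ∈ wordsOver A) (hb : b ∈ wordsOver B) :
    (a * b).toList.takeWhile (fun x => decide (x ∈ A)) = a.toList := by
  rw [toList_mul, List.takeWhile_append_of_pos fun x hx => by simpa using ha x hx]
  cases hl : b.toList with
  | nil => simp
  | cons x _ =>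
    have hxA : x ∉ A := hAB.notMem_of_mem_right (hb x (by simp [hl]))
    simp [hxA]

lemma eq_and_eq_of_mul_eq_mul_of_disjoint {A B : Set X} (hAB : Disjoint A B)
    {a a' b b' : FreeMonoid X} (ha : a ∈ wordsOver A) (ha' : a' ∈ wordsOver A)
    (hb : b ∈ wordsOver B) (hb' : b' ∈ wordsOver B) (h : a * b = a' * b') :
    a = a' ∧ b = b' := by
  have hprefix : a = a' := toList.injective <| by
    rw [← takeWhile_toList_mul_of_disjoint hAB ha hb, h,
      takeWhile_toList_mul_of_disjoint hAB ha' hb']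
  subst hprefix
  exact ⟨rfl, mul_left_cancel h⟩

end FreeMonoid

open FreeMonoid

namespace MonoidAlgebra

lemma coeff_mul_of_disjoint {R X : Type} [Semiring R] {A B : Set X} (hAB : Disjoint A B)
    {g h : MonoidAlgebra R (FreeMonoid X)}
    (hg : ↑g.coeff.support ⊆ wordsOver A) (hh : ↑h.coeff.support ⊆ wordsOver B)
    {a b : FreeMonoid X} (ha : a ∈ wordsOver A) (hb : b ∈ wordsOver B) :
    (g * h).coeff (a * b) = g.coeff a * h.coeff b := by
  classical
  simp only [coeff_mul, Finsupp.sum]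
  rw [← Finset.sum_product' (f := fun m₁ m₂ =>
    if m₁ * m₂ = a * b then g.coeff m₁ * h.coeff m₂ else 0), Finset.sum_eq_single (a, b)]
  · simp
  · rintro ⟨a', b'⟩ hp hne
    simp only [Finset.mem_product] at hp
    rw [if_neg]
    intro heq
    obtain ⟨rfl, rfl⟩ := eq_and_eq_of_mul_eq_mul_of_disjoint hAB (hg hp.1) ha (hh hp.2) hb heq
    exact hne rfl
  · intro hab
    rcases not_and_or.mp (Finset.mem_product.not.mp hab) with hga | hhb
    · simp [Finsupp.notMem_support_iff.mp hga]
    · simp [Finsupp.notMem_support_iff.mp hhb]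

lemma eq_smul_of_coeff_mul_eq {F M : Type} [Field F] {p q : MonoidAlgebra F M} {P : Set M}
    (hp : ↑p.coeff.support ⊆ P) (hq : ↑q.coeff.support ⊆ P) {c d : F} (hc : c ≠ 0)
    (h : ∀ m ∈ P, p.coeff m * c = q.coeff m * d) : p = (d / c) • q := by
  ext m
  rw [coeff_smul_apply, smul_eq_mul]
  by_cases hm : m ∈ P
  · rw [div_mul_eq_mul_div, eq_div_iff hc, h m hm, mul_comm]
  · rw [Finsupp.notMem_support_iff.mp fun h => hm (hp h),
      Finsupp.notMem_support_iff.mp fun h => hm (hq h), mul_zero]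

end MonoidAlgebra

open MonoidAlgebra

section

variable {F X : Type} [Field F]

lemma support_subset_wordsOver_vars (g : MonoidAlgebra F (FreeMonoid X)) :
    ↑g.coeff.support ⊆ wordsOver (vars g) :=
  fun m hm _ hx => ⟨m, hm, hx⟩

lemma support_nonempty_of_deg_pos {g : MonoidAlgebra F (FreeMonoid X)} (hg : 0 < deg g) :
    g.coeff.support.Nonempty :=
  Finset.nonempty_iff_ne_empty.mpr fun he => by simp [deg, he] at hg

end

theorem stmt6_general {F X : Type} [Field F] (f g h u v : MonoidAlgebra F (FreeMonoid X))
    (h1 : f = g * h) (h2 : f = u * v)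
    (hd1 : vars g ∩ vars h = ∅) (hd2 : vars u ∩ vars v = ∅)
    (hg : 0 < deg g) (hh : 0 < deg h)
    (hgu : vars g = vars u) :
    ∃ α β : F, α ≠ 0 ∧ β ≠ 0 ∧ g = α • u ∧ h = β • v := by
  have hAB : Disjoint (vars g) (vars h ∪ vars v) := Set.disjoint_union_right.mpr
    ⟨Set.disjoint_iff_inter_eq_empty.mpr hd1, hgu ▸ Set.disjoint_iff_inter_eq_empty.mpr hd2⟩
  have hgA := support_subset_wordsOver_vars g
  have huA : ↑u.coeff.support ⊆ wordsOver (vars g) := hgu ▸ support_subset_wordsOver_vars u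
  have hhB : ↑h.coeff.support ⊆ wordsOver (vars h ∪ vars v) :=
    (support_subset_wordsOver_vars h).trans (wordsOver_mono Set.subset_union_left)
  have hvB : ↑v.coeff.support ⊆ wordsOver (vars h ∪ vars v) :=
    (support_subset_wordsOver_vars v).trans (wordsOver_mono Set.subset_union_right)
  have hcoeff : ∀ a ∈ wordsOver (vars g), ∀ b ∈ wordsOver (vars h ∪ vars v),
      g.coeff a * h.coeff b = u.coeff a * v.coeff b := fun a ha b hb => by
    rw [← coeff_mul_of_disjoint hAB hgA hhB ha hb, ← coeff_mul_of_disjoint hAB huA hvB ha hb,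
      ← h1, ← h2]
  obtain ⟨a₀, ha₀⟩ := support_nonempty_of_deg_pos hg
  obtain ⟨b₀, hb₀⟩ := support_nonempty_of_deg_pos hh
  have hga₀ := Finsupp.mem_support_iff.mp ha₀
  have hhb₀ := Finsupp.mem_support_iff.mp hb₀
  have huv : u.coeff a₀ * v.coeff b₀ ≠ 0 :=
    hcoeff a₀ (hgA ha₀) b₀ (hhB hb₀) ▸ mul_ne_zero hga₀ hhb₀
  refine ⟨v.coeff b₀ / h.coeff b₀, u.coeff a₀ / g.coeff a₀,
    div_ne_zero (right_ne_zero_of_mul huv) hhb₀, div_ne_zero (left_ne_zero_of_mul huv) hga₀,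
    eq_smul_of_coeff_mul_eq hgA huA hhb₀ fun a ha => hcoeff a ha b₀ (hhB hb₀),
    eq_smul_of_coeff_mul_eq hhB hvB hga₀ fun b hb => ?_⟩
  rw [mul_comm, hcoeff a₀ (hgA ha₀) b hb, mul_comm]

theorem stmt6 {F X : Type} [Field F] (f g h u v : MonoidAlgebra F (FreeMonoid X))
    (h1 : f = g * h) (h2 : f = u * v)
    (hd1 : vars g ∩ vars h = ∅) (hd2 : vars u ∩ vars v = ∅)
    (hg : 0 < deg g) (hh : 0 < deg h) (hu : 0 < deg u) (hv : 0 < deg v)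
    (hgu : vars g = vars u) :
    ∃ α β : F, α ≠ 0 ∧ β ≠ 0 ∧ g = α • u ∧ h = β • v :=
  stmt6_general f g h u v h1 h2 hd1 hd2 hg hh hgu
end

section
/- If f ∈ F⟨X⟩ is multilinear (every variable occurs at most once in every nonzero monomial) and f = g·h is any nontrivial factorization, then Var(g) ∩ Var(h) = ∅. -/
section MaximalUniqueMul

variable {R M N : Type*} [Mul M] [UniqueProds M]
  [AddCommMonoid N] [LinearOrder N] [IsOrderedCancelAddMonoid N]

theorem UniqueProds.exists_uniqueMul_of_isMaxOn (d : M → N) (hd : ∀ a b, d (a * b) = d a + d b)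
    {A B : Finset M} (hA : A.Nonempty) (hB : B.Nonempty) :
    ∃ a ∈ A, ∃ b ∈ B, UniqueMul A B a b ∧ (∀ a' ∈ A, d a' ≤ d a) ∧ (∀ b' ∈ B, d b' ≤ d b) := by
  classical
  obtain ⟨a₁, ha₁, hmaxA⟩ := A.exists_max_image d hA
  obtain ⟨b₁, hb₁, hmaxB⟩ := B.exists_max_image d hB
  set A' := A.filter (d · = d a₁)
  set B' := B.filter (d · = d b₁)
  obtain ⟨a, ha, b, hb, huniq⟩ := UniqueProds.uniqueMul_of_nonempty (A := A') (B := B')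
    ⟨a₁, by simp [A', ha₁]⟩ ⟨b₁, by simp [B', hb₁]⟩
  simp only [A', B', Finset.mem_filter] at ha hb
  refine ⟨a, ha.1, b, hb.1, fun a' b' ha' hb' hab ↦ ?_, fun a' ha' ↦ ha.2 ▸ hmaxA a' ha',
    fun b' hb' ↦ hb.2 ▸ hmaxB b' hb'⟩
  -- a degree deficit of one factor cannot be made up by the other
  have hsum : d a' + d b' = d a₁ + d b₁ := by rw [← hd, hab, hd, ha.2, hb.2]
  have ha'max : d a' = d a₁ := (hmaxA a' ha').eq_of_not_lt fun hlt ↦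
    (add_lt_add_of_lt_of_le hlt (hmaxB b' hb')).ne hsum
  have hb'max : d b' = d b₁ := (hmaxB b' hb').eq_of_not_lt fun hlt ↦
    (add_lt_add_of_le_of_lt (hmaxA a' ha') hlt).ne hsum
  exact huniq (Finset.mem_filter.2 ⟨ha', ha'max⟩) (Finset.mem_filter.2 ⟨hb', hb'max⟩) hab

theorem MonoidAlgebra.exists_mul_mem_support_of_isMaxOn [Semiring R] [NoZeroDivisors R]
    (d : M → N) (hd : ∀ a b, d (a * b) = d a + d b) {p q : MonoidAlgebra R M}
    (hp : p.coeff.support.Nonempty) (hq : q.coeff.support.Nonempty) :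
    ∃ a ∈ p.coeff.support, ∃ b ∈ q.coeff.support, a * b ∈ (p * q).coeff.support ∧
      (∀ a' ∈ p.coeff.support, d a' ≤ d a) ∧ (∀ b' ∈ q.coeff.support, d b' ≤ d b) := by
  obtain ⟨a, ha, b, hb, huniq, hmaxA, hmaxB⟩ :=
    UniqueProds.exists_uniqueMul_of_isMaxOn d hd hp hq
  refine ⟨a, ha, b, hb, ?_, hmaxA, hmaxB⟩
  rw [Finsupp.mem_support_iff, MonoidAlgebra.coeff_mul_mul_of_uniqueMul huniq]
  exact mul_ne_zero (Finsupp.mem_support_iff.1 ha) (Finsupp.mem_support_iff.1 hb)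

end MaximalUniqueMul

theorem stmt8_general {F X : Type} [Field F] (f g h : MonoidAlgebra F (FreeMonoid X))
    (hml : ∀ m ∈ f.coeff.support, (FreeMonoid.toList m).Nodup)
    (hfact : f = g * h) :
    vars g ∩ vars h = ∅ := by
  classical
  refine Set.eq_empty_of_forall_notMem fun x ⟨⟨a₀, ha₀, hxa₀⟩, ⟨b₀, hb₀, hxb₀⟩⟩ ↦ ?_
  let count : FreeMonoid X → ℕ := fun m ↦ (FreeMonoid.toList m).count x
  have count_mul : ∀ u v, count (u * v) = count u + count v := fun u v ↦ by
    simp only [count, FreeMonoid.toList_mul, List.count_append]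
  obtain ⟨a, -, b, -, hab, hmaxA, hmaxB⟩ :=
    MonoidAlgebra.exists_mul_mem_support_of_isMaxOn count count_mul ⟨a₀, ha₀⟩ ⟨b₀, hb₀⟩
  have hxa : 0 < count a := (List.count_pos_iff.2 hxa₀).trans_le (hmaxA a₀ ha₀)
  have hxb : 0 < count b := (List.count_pos_iff.2 hxb₀).trans_le (hmaxB b₀ hb₀)
  have hle : count (a * b) ≤ 1 := List.nodup_iff_count_le_one.1 (hml _ (hfact ▸ hab)) x
  rw [count_mul] at hle
  omega

theorem stmt8 {F X : Type} [Field F] (f g h : MonoidAlgebra F (FreeMonoid X))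
    (hml : ∀ m ∈ f.coeff.support, (FreeMonoid.toList m).Nodup)
    (hfact : f = g * h) (hg : 0 < deg g) (hh : 0 < deg h) :
    vars g ∩ vars h = ∅ :=
  stmt8_general f g h hml hfact
end

section
/- Every multilinear polynomial in F⟨X⟩ has a unique factorization into irreducible polynomials, up to nonzero scalar multiples of the factors. -/
/-!
Degree, and for each variable `x` the largest number of occurrences of `x` in a monomial, are
additive under multiplication: free monoids have unique products, so among the monomials of
`p` and `q` that are maximal for such a grading some product occurs only once in `p * q`.
Additivity of degree gives factorizations into irreducibles. If `g * h` is multilinear,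
additivity of the occurrence counts makes `g` and `h` multilinear in disjoint sets of variables,
so every monomial of `g * h` splits uniquely as a monomial of `g` times one of `h`.

For two such factorizations `g * h = g' * h'`, comparing the positions of variables in the
monomials forces `vars g ⊆ vars g'` or the converse. In the first case let `v` be a longest
monomial of `h'`; its letters occur in neither `g` nor `g'`, so taking right quotients by `v`
gives `c • g' = g * rightQuot v h` with `c ≠ 0`, and irreducibility of `g'` makes the second
factor a scalar. Cancelling the first factors and inducting on the number of factors proves
uniqueness.
-/

namespace MonoidAlgebra

variable {R A : Type*} [Semiring R] [NoZeroDivisors R] [Mul A] [UniqueProds A]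

theorem sup_support_coeff_mul {φ : A → ℕ} (hφ : ∀ a b, φ (a * b) = φ a + φ b)
    {p q : R[A]} (hp : p ≠ 0) (hq : q ≠ 0) :
    (p * q).coeff.support.sup φ = p.coeff.support.sup φ + q.coeff.support.sup φ := by
  classical
  apply le_antisymm
  · refine Finset.sup_le fun w hw => ?_
    obtain ⟨a, ha, b, hb, rfl⟩ := Finset.mem_mul.1 (support_coeff_mul_subset p q hw)
    rw [hφ]
    exact add_le_add (Finset.le_sup ha) (Finset.le_sup hb)
  have hmax : ∀ r : R[A], r ≠ 0 →
      (r.coeff.support.filter fun a => φ a = r.coeff.support.sup φ).Nonempty := fun r hr => by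
    obtain ⟨a, ha, h⟩ := r.coeff.support.exists_mem_eq_sup
      (Finsupp.support_nonempty_iff.2 (mt coeff_eq_zero.1 hr)) φ
    exact ⟨a, Finset.mem_filter.2 ⟨ha, h.symm⟩⟩
  obtain ⟨a₀, ha₀, b₀, hb₀, huniq⟩ := UniqueProds.uniqueMul_of_nonempty (hmax p hp) (hmax q hq)
  rw [Finset.mem_filter] at ha₀ hb₀
  -- a factorization of `a₀ * b₀` from the supports must consist of factors of maximal `φ`
  have huniq' : UniqueMul p.coeff.support q.coeff.support a₀ b₀ := by
    intro a b ha hb hab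
    have hφa := Finset.le_sup (f := φ) ha
    have hφb := Finset.le_sup (f := φ) hb
    have := congrArg φ hab
    rw [hφ, hφ, ha₀.2, hb₀.2] at this
    exact huniq (Finset.mem_filter.2 ⟨ha, by omega⟩) (Finset.mem_filter.2 ⟨hb, by omega⟩) hab
  have hmem : a₀ * b₀ ∈ (p * q).coeff.support := by
    rw [Finsupp.mem_support_iff, coeff_mul_mul_of_uniqueMul huniq']
    exact mul_ne_zero (Finsupp.mem_support_iff.1 ha₀.1) (Finsupp.mem_support_iff.1 hb₀.1)
  calc p.coeff.support.sup φ + q.coeff.support.sup φ = φ (a₀ * b₀) := by rw [hφ, ha₀.2, hb₀.2]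
    _ ≤ _ := Finset.le_sup hmem

end MonoidAlgebra

section Words

variable {X : Type}

theorem List.eq_nil_of_disjoint {S T : Set X} (hST : _root_.Disjoint S T) {m : List X}
    (hS : ∀ x ∈ m, x ∈ S) (hT : ∀ x ∈ m, x ∈ T) : m = [] :=
  List.eq_nil_iff_forall_not_mem.2 fun x hx => Set.disjoint_left.1 hST (hS x hx) (hT x hx)

theorem List.eq_and_eq_of_append_eq_append {S T : Set X} (hST : _root_.Disjoint S T)
    {a b a' b' : List X} (ha : ∀ x ∈ a, x ∈ S) (ha' : ∀ x ∈ a', x ∈ S)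
    (hb : ∀ x ∈ b, x ∈ T) (hb' : ∀ x ∈ b', x ∈ T) (h : a' ++ b' = a ++ b) :
    a' = a ∧ b' = b := by
  rcases List.append_eq_append_iff.1 h with ⟨m, rfl, rfl⟩ | ⟨m, rfl, rfl⟩
  · obtain rfl := List.eq_nil_of_disjoint (m := m) hST (fun x hx => ha x (by simp [hx]))
      (fun x hx => hb' x (by simp [hx]))
    simp
  · obtain rfl := List.eq_nil_of_disjoint (m := m) hST (fun x hx => ha' x (by simp [hx]))
      (fun x hx => hb x (by simp [hx]))
    simp

theorem List.exists_eq_append_of_append_eq_append {a d s v : List X}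
    (hav : ∀ x ∈ a, x ∉ v) (h : a ++ d = s ++ v) : ∃ t, s = a ++ t := by
  rcases List.append_eq_append_iff.1 h with ⟨m, rfl, -⟩ | ⟨m, rfl, hv⟩
  · exact ⟨m, rfl⟩
  · obtain rfl : m = [] := List.eq_nil_iff_forall_not_mem.2 fun x hx =>
      hav x (by simp [hx]) (by simp [hv, hx])
    exact ⟨[], by simp⟩

end Words

open MonoidAlgebra

section FreeAlgebra

variable {F X : Type} [Field F]

theorem deg_mul {p q : F[FreeMonoid X]} (hp : p ≠ 0) (hq : q ≠ 0) :
    deg (p * q) = deg p + deg q :=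
  sup_support_coeff_mul FreeMonoid.length_mul hp hq

theorem deg_smul {c : F} (hc : c ≠ 0) (p : F[FreeMonoid X]) : deg (c • p) = deg p := by
  rw [deg, deg, coeff_smul, Finsupp.support_smul_eq hc]

theorem deg_one : deg (1 : F[FreeMonoid X]) = 0 := by
  simp [deg, one_def]

theorem ne_zero_of_deg_pos_s9 {p : F[FreeMonoid X]} (h : 0 < deg p) : p ≠ 0 := by
  rintro rfl
  simp [deg] at h

theorem eq_smul_one_of_deg_eq_zero {q : F[FreeMonoid X]} (h : deg q = 0) :
    q = q.coeff 1 • 1 := by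
  ext m
  by_cases hm : m = 1
  · simp [hm, one_def]
  · have : m ∉ q.coeff.support := fun hmem =>
      hm (FreeMonoid.length_eq_zero.1 (Nat.le_zero.1 (h ▸ Finset.le_sup hmem)))
    simp [Finsupp.notMem_support_iff.1 this, one_def, Ne.symm hm]

def IsMultilinear (p : F[FreeMonoid X]) : Prop :=
  ∀ m ∈ p.coeff.support, (FreeMonoid.toList m).Nodup

section Multilinear

open Classical in
theorem sup_count_mul (x : X) {p q : F[FreeMonoid X]} (hp : p ≠ 0) (hq : q ≠ 0) :
    (p * q).coeff.support.sup (fun m => (FreeMonoid.toList m).count x) =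
      p.coeff.support.sup (fun m => (FreeMonoid.toList m).count x) +
        q.coeff.support.sup (fun m => (FreeMonoid.toList m).count x) :=
  sup_support_coeff_mul (fun a b => by rw [FreeMonoid.toList_mul, List.count_append]) hp hq

open Classical in
theorem isMultilinear_iff_sup_count_le_one {p : F[FreeMonoid X]} :
    IsMultilinear p ↔ ∀ x, p.coeff.support.sup (fun m => (FreeMonoid.toList m).count x) ≤ 1 := by
  simp only [IsMultilinear, List.nodup_iff_count_le_one, Finset.sup_le_iff]
  exact ⟨fun h x m hm => h m hm x, fun h m hm x => h x m hm⟩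

open Classical in
theorem one_le_sup_count_of_mem_vars {p : F[FreeMonoid X]} {x : X} (hx : x ∈ vars p) :
    1 ≤ p.coeff.support.sup (fun m => (FreeMonoid.toList m).count x) := by
  obtain ⟨m, hm, hxm⟩ := hx
  exact (List.one_le_count_iff.2 hxm).trans (Finset.le_sup (f := fun m => _) hm)

variable {g h : F[FreeMonoid X]}

theorem IsMultilinear.right_of_mul (hgh : IsMultilinear (g * h)) (hg : g ≠ 0) (hh : h ≠ 0) :
    IsMultilinear h := by
  classical
  rw [isMultilinear_iff_sup_count_le_one] at hgh ⊢
  intro x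
  have := hgh x
  rw [sup_count_mul x hg hh] at this
  omega

theorem IsMultilinear.disjoint_vars (hgh : IsMultilinear (g * h)) (hg : g ≠ 0) (hh : h ≠ 0) :
    Disjoint (vars g) (vars h) := by
  classical
  rw [isMultilinear_iff_sup_count_le_one] at hgh
  refine Set.disjoint_left.2 fun x hxg hxh => ?_
  have := hgh x
  rw [sup_count_mul x hg hh] at this
  have := one_le_sup_count_of_mem_vars hxg
  have := one_le_sup_count_of_mem_vars hxh
  omega

end Multilinear

section DisjointProduct

variable {g h : F[FreeMonoid X]}

theorem mem_vars_of_mem_support {p : F[FreeMonoid X]} {m : FreeMonoid X}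
    (hm : m ∈ p.coeff.support) : ∀ x ∈ m.toList, x ∈ vars p :=
  fun _ hx => ⟨m, hm, hx⟩

theorem uniqueMul_support_of_disjoint_vars_s9 (hgh : Disjoint (vars g) (vars h))
    {a b : FreeMonoid X} (ha : a ∈ g.coeff.support) (hb : b ∈ h.coeff.support) :
    UniqueMul g.coeff.support h.coeff.support a b := fun a' b' ha' hb' hab => by
  have := List.eq_and_eq_of_append_eq_append hgh (mem_vars_of_mem_support ha)
    (mem_vars_of_mem_support ha') (mem_vars_of_mem_support hb) (mem_vars_of_mem_support hb')
    (congrArg FreeMonoid.toList hab)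
  exact ⟨FreeMonoid.toList.injective this.1, FreeMonoid.toList.injective this.2⟩

theorem mem_support_mul_of_disjoint_vars (hgh : Disjoint (vars g) (vars h))
    {w : FreeMonoid X} :
    w ∈ (g * h).coeff.support ↔ ∃ a ∈ g.coeff.support, ∃ b ∈ h.coeff.support, a * b = w := by
  classical
  constructor
  · intro hw
    simpa [Finset.mem_mul] using support_coeff_mul_subset g h hw
  · rintro ⟨a, ha, b, hb, rfl⟩
    rw [Finsupp.mem_support_iff, coeff_mul_mul_of_uniqueMul
      (uniqueMul_support_of_disjoint_vars_s9 hgh ha hb)]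
    exact mul_ne_zero (Finsupp.mem_support_iff.1 ha) (Finsupp.mem_support_iff.1 hb)

variable {g' h' : F[FreeMonoid X]}

theorem vars_subset_or_subset_of_mul_eq_mul (heq : g * h = g' * h') (hh' : h' ≠ 0)
    (hgh : Disjoint (vars g) (vars h)) (hgh' : Disjoint (vars g') (vars h')) :
    vars g ⊆ vars g' ∨ vars g' ⊆ vars g := by
  by_contra! hcon
  obtain ⟨⟨x, hxg, hxg'⟩, ⟨y, hyg', hyg⟩⟩ := And.imp Set.not_subset.1 Set.not_subset.1 hcon
  -- a monomial `a * b` of `g * h` whose right factor `b` contains `y`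
  obtain ⟨u, hu, hyu⟩ := hyg'
  obtain ⟨v, hv⟩ := Finsupp.support_nonempty_iff.2 (mt coeff_eq_zero.1 hh')
  obtain ⟨a, ha, b, hb, hab⟩ := (mem_support_mul_of_disjoint_vars hgh).1
    (heq ▸ (mem_support_mul_of_disjoint_vars hgh').2 ⟨u, hu, v, hv, rfl⟩)
  have hyb : y ∈ b.toList := by
    have : y ∈ (a * b).toList := hab ▸ List.mem_append_left _ hyu
    exact (List.mem_append.1 this).resolve_left fun hya => hyg ⟨a, ha, hya⟩
  obtain ⟨a', ha', hxa'⟩ := hxg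
  obtain ⟨u', hu', v', hv', huv⟩ := (mem_support_mul_of_disjoint_vars hgh').1
    (heq ▸ (mem_support_mul_of_disjoint_vars hgh).2 ⟨a', ha', b, hb, rfl⟩)
  have hyu' : y ∈ u'.toList := by
    have : y ∈ (u' * v').toList := huv ▸ List.mem_append_right _ hyb
    exact (List.mem_append.1 this).resolve_right fun hyv =>
      Set.disjoint_left.1 hgh' ⟨u, hu, hyu⟩ ⟨v', hv', hyv⟩
  -- `x` lies in `a'` but not in `u'`, `y` in `u'` but not in `a'`, and `a' * b = u' * v'`
  rcases List.prefix_or_prefix_of_prefix (l₂ := u'.toList)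
      (List.prefix_append a'.toList b.toList)
      (by rw [← FreeMonoid.toList_mul, ← huv]; exact List.prefix_append _ _) with hpre | hpre
  · exact hxg' ⟨u', hu', hpre.subset hxa'⟩
  · exact hyg ⟨a', ha', hpre.subset hyu'⟩

end DisjointProduct

section RightQuotient

noncomputable def rightQuot (v : FreeMonoid X) (p : F[FreeMonoid X]) : F[FreeMonoid X] :=
  ofCoeff (p.coeff.comapDomain (· * v) (mul_left_injective v).injOn)

theorem coeff_rightQuot (v : FreeMonoid X) (p : F[FreeMonoid X]) (s : FreeMonoid X) :
    (rightQuot v p).coeff s = p.coeff (s * v) :=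
  Finsupp.comapDomain_apply _ _ _ _

theorem coeff_single_mul_rightQuot {a v : FreeMonoid X} (hav : ∀ x ∈ a.toList, x ∉ v.toList)
    (r : F) (h : F[FreeMonoid X]) (s : FreeMonoid X) :
    (single a r * h).coeff (s * v) = (single a r * rightQuot v h).coeff s := by
  by_cases hs : ∃ t, s = a * t
  · obtain ⟨t, rfl⟩ := hs
    rw [coeff_single_mul_eq_mul_coeff (t * v) fun _ _ => by rw [mul_assoc, mul_right_inj],
      coeff_single_mul_eq_mul_coeff t fun _ _ => mul_right_inj a, coeff_rightQuot]
  · rw [not_exists] at hs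
    rw [coeff_single_mul_of_forall_mul_ne _ _ fun d had => ?_,
      coeff_single_mul_of_forall_mul_ne _ _ fun d had => hs d had.symm]
    obtain ⟨t, ht⟩ :=
      List.exists_eq_append_of_append_eq_append hav (congrArg FreeMonoid.toList had)
    exact hs t (FreeMonoid.toList.injective ht)

theorem rightQuot_mul {g : F[FreeMonoid X]} {v : FreeMonoid X}
    (hv : ∀ x ∈ v.toList, x ∉ vars g) (h : F[FreeMonoid X]) :
    rightQuot v (g * h) = g * rightQuot v h := by
  ext s
  rw [coeff_rightQuot]
  conv_lhs => rw [← g.sum_coeff_single]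
  conv_rhs => rw [← g.sum_coeff_single]
  simp only [Finsupp.sum, Finset.sum_mul, coeff_sum, Finset.sum_apply']
  refine Finset.sum_congr rfl fun a ha => coeff_single_mul_rightQuot (fun x hxa hxv => ?_) _ _ _
  exact hv x hxv (mem_vars_of_mem_support ha x hxa)

theorem rightQuot_eq_smul_one {p : F[FreeMonoid X]} {v : FreeMonoid X}
    (hv : deg p ≤ v.length) : rightQuot v p = p.coeff v • 1 := by
  ext s
  rw [coeff_rightQuot]
  by_cases hs : s = 1
  · simp [hs, one_def]
  · have hlen : deg p < (s * v).length := by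
      rw [FreeMonoid.length_mul]
      have := FreeMonoid.length_eq_zero.not.2 hs
      omega
    rw [Finsupp.notMem_support_iff.1 fun hmem => (Finset.le_sup hmem).not_gt hlen]
    simp [one_def, Ne.symm hs]

end RightQuotient

section Associates

variable {g h g' h' : F[FreeMonoid X]}

theorem exists_eq_mul_of_vars_subset (heq : g * h = g' * h') (hh' : h' ≠ 0)
    (hgh' : Disjoint (vars g') (vars h')) (hsub : vars g ⊆ vars g') : ∃ q, g' = g * q := by
  obtain ⟨v, hv, hdeg⟩ := h'.coeff.support.exists_mem_eq_sup
    (Finsupp.support_nonempty_iff.2 (mt coeff_eq_zero.1 hh')) FreeMonoid.length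
  have hvg' : ∀ x ∈ v.toList, x ∉ vars g' := fun x hx hxg' =>
    Set.disjoint_left.1 hgh' hxg' (mem_vars_of_mem_support hv x hx)
  have hc : h'.coeff v ≠ 0 := Finsupp.mem_support_iff.1 hv
  -- the right quotient by `v` passes through `g` and `g'` and turns `h'` into a scalar
  have key : h'.coeff v • g' = g * rightQuot v h := by
    rw [← rightQuot_mul fun x hx hxg => hvg' x hx (hsub hxg), heq, rightQuot_mul hvg',
      rightQuot_eq_smul_one hdeg.le, mul_smul_comm, mul_one]
  refine ⟨(h'.coeff v)⁻¹ • rightQuot v h, ?_⟩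
  rw [mul_smul_comm, ← key, smul_smul, inv_mul_cancel₀ hc, one_smul]

theorem Irred.eq_smul_of_eq_mul {q : F[FreeMonoid X]} (hg' : Irred g')
    (hg'0 : g' ≠ 0) (hdg : 0 < deg g) (hq : g' = g * q) : ∃ c : F, c ≠ 0 ∧ g' = c • g := by
  have hq0 : q ≠ 0 := by rintro rfl; exact hg'0 (by rw [hq, mul_zero])
  have hdq : deg q = 0 := Nat.eq_zero_of_not_pos fun hdq => hg' ⟨g, q, hq, hdg, hdq⟩
  have hq1 := eq_smul_one_of_deg_eq_zero hdq
  refine ⟨q.coeff 1, fun hc => hq0 (by rw [hq1, hc, zero_smul]), ?_⟩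
  rw [hq, hq1, mul_smul_comm, mul_one, coeff_smul_apply, coeff_one_one, smul_eq_mul, mul_one]

theorem eq_smul_of_mul_eq_mul (hml : IsMultilinear (g * h)) (heq : g * h = g' * h')
    (hne : g * h ≠ 0) (hg : Irred g) (hg' : Irred g') (hdg : 0 < deg g) (hdg' : 0 < deg g') :
    ∃ c : F, c ≠ 0 ∧ g = c • g' := by
  obtain ⟨hg0, hh0⟩ := mul_ne_zero_iff.1 hne
  obtain ⟨hg'0, hh'0⟩ := mul_ne_zero_iff.1 (heq ▸ hne)
  have hgh := hml.disjoint_vars hg0 hh0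
  have hgh' := (heq ▸ hml).disjoint_vars hg'0 hh'0
  rcases vars_subset_or_subset_of_mul_eq_mul heq hh'0 hgh hgh' with hsub | hsub
  · obtain ⟨q, hq⟩ := exists_eq_mul_of_vars_subset heq hh'0 hgh' hsub
    obtain ⟨c, hc, rfl⟩ := hg'.eq_smul_of_eq_mul hg'0 hdg hq
    exact ⟨c⁻¹, inv_ne_zero hc, by rw [smul_smul, inv_mul_cancel₀ hc, one_smul]⟩
  · obtain ⟨q, hq⟩ := exists_eq_mul_of_vars_subset heq.symm hh0 hgh hsub
    exact hg.eq_smul_of_eq_mul hg0 hdg' hq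

end Associates

theorem deg_prod_cons_pos {p : F[FreeMonoid X]} {L : List (F[FreeMonoid X])}
    (hL : ∀ q ∈ p :: L, 0 < deg q) : 0 < deg (p :: L).prod := by
  have hL0 : L.prod ≠ 0 := List.prod_ne_zero fun h0 => by
    simpa [deg] using hL 0 (List.mem_cons_of_mem _ h0)
  have hp := hL p List.mem_cons_self
  rw [List.prod_cons, deg_mul (ne_zero_of_deg_pos_s9 hp) hL0]
  omega

theorem forall₂_smul_of_prod_eq_smul_prod :
    ∀ (gs us : List (F[FreeMonoid X])) (c : F), c ≠ 0 → IsMultilinear gs.prod →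
      gs.prod = c • us.prod → (∀ p ∈ gs, Irred p ∧ 0 < deg p) →
      (∀ p ∈ us, Irred p ∧ 0 < deg p) →
      List.Forall₂ (fun g u => ∃ α : F, α ≠ 0 ∧ g = α • u) gs us
  | [], [], _, _, _, _, _, _ => .nil
  | [], u :: ut, c, hc, _, heq, _, hus => by
    have := deg_prod_cons_pos fun q hq => (hus q hq).2
    rw [← deg_smul hc, ← heq, List.prod_nil, deg_one] at this
    omega
  | g :: gt, [], c, hc, _, heq, hgs, _ => by
    have := deg_prod_cons_pos fun q hq => (hgs q hq).2
    rw [heq, List.prod_nil, deg_smul hc, deg_one] at this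
    omega
  | g :: gt, u :: ut, c, hc, hml, heq, hgs, hus => by
    obtain ⟨hg, hdg⟩ := hgs g List.mem_cons_self
    obtain ⟨hu, hdu⟩ := hus u List.mem_cons_self
    have hne : g * gt.prod ≠ 0 :=
      ne_zero_of_deg_pos_s9 (deg_prod_cons_pos fun q hq => (hgs q hq).2)
    rw [List.prod_cons] at hml
    have heq' : g * gt.prod = u * (c • ut.prod) := by
      rw [← List.prod_cons, heq, List.prod_cons, mul_smul_comm]
    obtain ⟨α, hα, rfl⟩ := eq_smul_of_mul_eq_mul hml heq' hne hg hu hdg hdu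
    have htail : gt.prod = (α⁻¹ * c) • ut.prod := by
      refine mul_left_cancel₀ (ne_zero_of_deg_pos_s9 hdu) ?_
      rw [mul_smul_comm, mul_smul, ← mul_smul_comm, ← heq', smul_mul_assoc, smul_smul,
        inv_mul_cancel₀ hα, one_smul]
    refine .cons ⟨α, hα, rfl⟩ (forall₂_smul_of_prod_eq_smul_prod gt ut _
      (mul_ne_zero (inv_ne_zero hα) hc) ?_ htail (fun p hp => hgs p (List.mem_cons_of_mem _ hp))
      (fun p hp => hus p (List.mem_cons_of_mem _ hp)))
    exact hml.right_of_mul (ne_zero_of_deg_pos_s9 hdg) (mul_ne_zero_iff.1 hne).2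

theorem exists_prod_irred (f : F[FreeMonoid X]) :
    ∃ L : List (F[FreeMonoid X]), f = L.prod ∧ ∀ p ∈ L, Irred p := by
  induction hn : deg f using Nat.strong_induction_on generalizing f with
  | _ n ih =>
    by_cases hf : Irred f
    · exact ⟨[f], by simp, by simpa using hf⟩
    obtain ⟨a, b, rfl, ha, hb⟩ := not_not.1 hf
    rw [deg_mul (ne_zero_of_deg_pos_s9 ha) (ne_zero_of_deg_pos_s9 hb)] at hn
    obtain ⟨La, rfl, hLa⟩ := ih _ (by omega) a rfl
    obtain ⟨Lb, rfl, hLb⟩ := ih _ (by omega) b rfl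
    exact ⟨La ++ Lb, List.prod_append.symm,
      fun p hp => (List.mem_append.1 hp).elim (hLa p) (hLb p)⟩

end FreeAlgebra

theorem stmt9 {F X : Type} [Field F] (f : MonoidAlgebra F (FreeMonoid X))
    (hml : ∀ m ∈ f.coeff.support, (FreeMonoid.toList m).Nodup) :
    (∃ L : List (MonoidAlgebra F (FreeMonoid X)), f = L.prod ∧ ∀ p ∈ L, Irred p) ∧
    (∀ gs us : List (MonoidAlgebra F (FreeMonoid X)),
      f = gs.prod → f = us.prod →
      (∀ p ∈ gs, Irred p ∧ 0 < deg p) → (∀ p ∈ us, Irred p ∧ 0 < deg p) →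
      gs.length = us.length ∧
        ∀ (i : Nat) (hi : i < gs.length) (hi' : i < us.length),
          ∃ α : F, α ≠ 0 ∧ gs.get ⟨i, hi⟩ = α • us.get ⟨i, hi'⟩) := by
  refine ⟨exists_prod_irred f, fun gs us hgs hus hgs' hus' => ?_⟩
  have h := forall₂_smul_of_prod_eq_smul_prod gs us 1 one_ne_zero (hgs ▸ hml)
    (by rw [← hgs, ← hus, one_smul]) hgs' hus'
  exact ⟨h.length_eq, h.get⟩
end

section
/- Let f ∈ F⟨X⟩ be a polynomial and let y, z be two fresh variables not in X. Then f = 0 if and only if f + y·z admits a nontrivial variable-disjoint factorization. -/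
section Aux
variable {F σ : Type} [Field F]

lemma len_def (m : FreeMonoid σ) : FreeMonoid.length m = m.toList.length := rfl

lemma toList_mul (a b : FreeMonoid σ) : (a * b).toList = a.toList ++ b.toList := rfl

lemma mem_vars {p : MonoidAlgebra F (FreeMonoid σ)} {x : σ} :
    x ∈ vars p ↔ ∃ m ∈ p.coeff.support, x ∈ FreeMonoid.toList m := Iff.rfl

/-- Top coefficient lemma: coefficient of product of top monomials. -/
lemma top_coeff (p q : MonoidAlgebra F (FreeMonoid σ)) {m n : FreeMonoid σ}
    (hm : m ∈ p.coeff.support) (hn : n ∈ q.coeff.support)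
    (hmt : deg p ≤ FreeMonoid.length m) (hnt : deg q ≤ FreeMonoid.length n) :
    (p * q).coeff (m * n) = p.coeff m * q.coeff n := by
  classical
  rw [MonoidAlgebra.coeff_mul, Finsupp.sum, Finset.sum_eq_single m]
  · rw [Finsupp.sum, Finset.sum_eq_single n]
    · simp
    · intro b hb hbn
      rw [if_neg]
      intro hab
      exact hbn (mul_left_cancel hab)
    · intro hns; exact absurd hn hns
  · intro a ha ham
    apply Finset.sum_eq_zero
    intro b hb
    show (if a * b = m * n then p.coeff a * q.coeff b else 0) = 0
    rw [if_neg]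
    intro hab
    have hla : FreeMonoid.length a ≤ deg p := Finset.le_sup ha
    have hlb : FreeMonoid.length b ≤ deg q := Finset.le_sup hb
    have hlist : a.toList ++ b.toList = m.toList ++ n.toList := congrArg FreeMonoid.toList hab
    have hlen : a.toList.length + b.toList.length = m.toList.length + n.toList.length := by
      have := congrArg List.length hlist
      simpa using this
    have hmm : FreeMonoid.length m ≤ deg p := Finset.le_sup hm
    have hnn : FreeMonoid.length n ≤ deg q := Finset.le_sup hn
    have hal : a.toList.length = m.toList.length := by
      simp only [len_def] at hla hlb hmt hnt hmm hnn
      omega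
    have : a.toList = m.toList := List.append_inj_left hlist hal
    exact ham (FreeMonoid.toList.injective this)
  · intro hms; exact absurd hm hms

lemma exists_top {p : MonoidAlgebra F (FreeMonoid σ)} (hp : p ≠ 0) :
    ∃ m ∈ p.coeff.support, FreeMonoid.length m = deg p := by
  obtain ⟨m, hm, he⟩ := Finset.exists_mem_eq_sup p.coeff.support
    (Finsupp.support_nonempty_iff.mpr (fun h0 => hp (MonoidAlgebra.coeff_eq_zero.mp h0))) FreeMonoid.length
  exact ⟨m, hm, he.symm⟩

lemma filter_eq_self {P : FreeMonoid σ → Prop} [DecidablePred P] {p : MonoidAlgebra F (FreeMonoid σ)}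
    (h : ∀ m ∈ p.coeff.support, P m) : Finsupp.filter P p.coeff = p.coeff := by
  ext m
  by_cases hP : P m
  · rw [Finsupp.filter_apply_pos _ _ hP]
  · rw [Finsupp.filter_apply_neg _ _ hP]
    by_contra hne
    exact hP (h m (Finsupp.mem_support_iff.mpr fun h0 => hne h0.symm))

lemma filter_eq_zero {P : FreeMonoid σ → Prop} [DecidablePred P] {p : MonoidAlgebra F (FreeMonoid σ)}
    (h : ∀ m ∈ p.coeff.support, ¬ P m) : Finsupp.filter P p.coeff = 0 := by
  ext m
  by_cases hP : P m
  · rw [Finsupp.filter_apply_pos _ _ hP]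
    by_contra hne
    exact h m (Finsupp.mem_support_iff.mpr fun h0 => hne (h0.trans rfl)) hP
  · rw [Finsupp.filter_apply_neg _ _ hP]; rfl

lemma mul_support_class {p q : MonoidAlgebra F (FreeMonoid σ)}
    {P Q R : FreeMonoid σ → Prop}
    (hp : ∀ m ∈ p.coeff.support, P m) (hq : ∀ n ∈ q.coeff.support, Q n)
    (hR : ∀ m n, P m → Q n → R (m * n)) :
    ∀ w ∈ (p * q).coeff.support, R w := by
  classical
  intro w hw
  obtain ⟨m, hm, n, hn, hmn⟩ := Finset.mem_mul.mp (MonoidAlgebra.support_coeff_mul_subset p q hw)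
  exact hmn ▸ hR m n (hp m hm) (hq n hn)

lemma split2 {l1 l2 : List σ} {a b : σ} (h : l1 ++ l2 = [a, b]) :
    (l1 = [] ∧ l2 = [a, b]) ∨ (l1 = [a] ∧ l2 = [b]) ∨ (l1 = [a, b] ∧ l2 = []) := by
  rcases l1 with _ | ⟨x, _ | ⟨y, _ | ⟨z, l1⟩⟩⟩ <;> simp_all

lemma mul_ne_zero' (p q : MonoidAlgebra F (FreeMonoid σ)) (hp : p ≠ 0) (hq : q ≠ 0) :
    p * q ≠ 0 := by
  obtain ⟨m, hm, hml⟩ := exists_top hp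
  obtain ⟨n, hn, hnl⟩ := exists_top hq
  intro h0
  have ht := top_coeff p q hm hn hml.ge hnl.ge
  rw [h0, MonoidAlgebra.coeff_zero, Finsupp.zero_apply] at ht
  exact mul_ne_zero (Finsupp.mem_support_iff.mp hm) (Finsupp.mem_support_iff.mp hn) ht.symm


end Aux

section Main
variable {F X : Type} [Field F]

section Main
variable {F X : Type} [Field F]

theorem stmt12' (f : MonoidAlgebra F (FreeMonoid (X ⊕ Fin 2)))
    (hfX : vars f ⊆ Set.range Sum.inl) :
    let y : MonoidAlgebra F (FreeMonoid (X ⊕ Fin 2)) :=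
      MonoidAlgebra.of F (FreeMonoid (X ⊕ Fin 2)) (FreeMonoid.of (Sum.inr 0))
    let z : MonoidAlgebra F (FreeMonoid (X ⊕ Fin 2)) :=
      MonoidAlgebra.of F (FreeMonoid (X ⊕ Fin 2)) (FreeMonoid.of (Sum.inr 1))
    (f = 0 ↔ ∃ g h : MonoidAlgebra F (FreeMonoid (X ⊕ Fin 2)),
        f + y * z = g * h ∧ 0 < deg g ∧ 0 < deg h ∧ vars g ∩ vars h = ∅) := by
  classical
  intro y z
  have hyv : y = MonoidAlgebra.single (FreeMonoid.of (Sum.inr 0)) (1 : F) := rfl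
  have hzv : z = MonoidAlgebra.single (FreeMonoid.of (Sum.inr 1)) (1 : F) := rfl
  set w : FreeMonoid (X ⊕ Fin 2) := FreeMonoid.of (Sum.inr 0) * FreeMonoid.of (Sum.inr 1) with hw
  have hwl : FreeMonoid.toList w = [Sum.inr 0, Sum.inr 1] := rfl
  have hyz : y * z = MonoidAlgebra.single w (1 : F) := by
    rw [hyv, hzv, MonoidAlgebra.single_mul_single, one_mul]
  have hfS : ∀ m ∈ f.coeff.support, ∀ j : Fin 2, Sum.inr j ∉ FreeMonoid.toList m := by
    intro m hm j hj
    obtain ⟨x, hx⟩ := hfX ⟨m, hm, hj⟩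
    exact absurd hx (by simp)
  constructor
  · intro hf0
    refine ⟨y, z, by rw [hf0, zero_add], ?_, ?_, ?_⟩
    · rw [hyv]
      have : deg (MonoidAlgebra.single (FreeMonoid.of (Sum.inr 0) : FreeMonoid (X ⊕ Fin 2)) (1 : F)) = 1 := by
        simp [deg, MonoidAlgebra.coeff_single, Finsupp.support_single_ne_zero _ (one_ne_zero (α := F)), len_def]
      omega
    · rw [hzv]
      have : deg (MonoidAlgebra.single (FreeMonoid.of (Sum.inr 1) : FreeMonoid (X ⊕ Fin 2)) (1 : F)) = 1 := by
        simp [deg, MonoidAlgebra.coeff_single, Finsupp.support_single_ne_zero _ (one_ne_zero (α := F)), len_def]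
      omega
    · apply Set.eq_empty_iff_forall_notMem.mpr
      rintro x ⟨hxg, hxh⟩
      obtain ⟨m, hm, hx1⟩ := hxg
      obtain ⟨n, hn, hx2⟩ := hxh
      rw [hyv, MonoidAlgebra.coeff_single, Finsupp.support_single_ne_zero _ (one_ne_zero (α := F)), Finset.mem_singleton] at hm
      rw [hzv, MonoidAlgebra.coeff_single, Finsupp.support_single_ne_zero _ (one_ne_zero (α := F)), Finset.mem_singleton] at hn
      subst hm; subst hn
      simp only [FreeMonoid.toList_of, List.mem_singleton] at hx1 hx2
      rw [hx1] at hx2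
      exact absurd (Sum.inr.inj hx2) (by decide)
  · rintro ⟨g, h, heq, dg, dh, disj⟩
    have hdisj : ∀ x, x ∈ vars g → x ∈ vars h → False := fun x h1 h2 =>
      Set.notMem_empty x (disj ▸ (⟨h1, h2⟩ : x ∈ vars g ∩ vars h))
    have hg0 : g ≠ 0 := by intro h0; rw [h0] at dg; simp [deg] at dg
    have hh0 : h ≠ 0 := by intro h0; rw [h0] at dh; simp [deg] at dh
    have hf_w : f.coeff w = 0 := by
      by_contra hfw
      exact hfS w (Finsupp.mem_support_iff.mpr hfw) 0 (by rw [hwl]; simp)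
    have hcoef : (g * h).coeff w = (1 : F) := by
      rw [← heq, MonoidAlgebra.coeff_add, Finsupp.add_apply, hf_w, hyz, zero_add, MonoidAlgebra.coeff_single, Finsupp.single_eq_same]
    have hwmem : w ∈ (g * h).coeff.support := Finsupp.mem_support_iff.mpr (by rw [hcoef]; exact one_ne_zero)
    obtain ⟨m0, hm0, n0, hn0, hmn0⟩ := Finset.mem_mul.mp (MonoidAlgebra.support_coeff_mul_subset g h hwmem)
    have hsplit0 := split2 (l1 := FreeMonoid.toList m0) (l2 := FreeMonoid.toList n0)
      (by rw [← toList_mul, hmn0, hwl])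
    have hyloc : Sum.inr (0 : Fin 2) ∈ vars g ∨ Sum.inr (0 : Fin 2) ∈ vars h := by
      rcases hsplit0 with ⟨h1, h2⟩ | ⟨h1, h2⟩ | ⟨h1, h2⟩
      · exact Or.inr ⟨n0, hn0, by rw [h2]; simp⟩
      · exact Or.inl ⟨m0, hm0, by rw [h1]; simp⟩
      · exact Or.inl ⟨m0, hm0, by rw [h1]; simp⟩
    have hzloc : Sum.inr (1 : Fin 2) ∈ vars g ∨ Sum.inr (1 : Fin 2) ∈ vars h := by
      rcases hsplit0 with ⟨h1, h2⟩ | ⟨h1, h2⟩ | ⟨h1, h2⟩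
      · exact Or.inr ⟨n0, hn0, by rw [h2]; simp⟩
      · exact Or.inr ⟨n0, hn0, by rw [h2]; simp⟩
      · exact Or.inl ⟨m0, hm0, by rw [h1]; simp⟩
    rcases hyloc with hyg | hyh <;> rcases hzloc with hzg | hzh
    · -- y ∈ g, z ∈ g : contradiction by degrees
      exfalso
      have hyh' : Sum.inr (0 : Fin 2) ∉ vars h := fun hc => hdisj _ hyg hc
      have hzh' : Sum.inr (1 : Fin 2) ∉ vars h := fun hc => hdisj _ hzg hc
      have hhS : ∀ n ∈ h.coeff.support, ¬ (Sum.inr (0 : Fin 2) ∈ FreeMonoid.toList n ∨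
          Sum.inr (1 : Fin 2) ∈ FreeMonoid.toList n) := by
        rintro n hn (hc | hc)
        exacts [hyh' ⟨n, hn, hc⟩, hzh' ⟨n, hn, hc⟩]
      set P : FreeMonoid (X ⊕ Fin 2) → Prop := fun m =>
        Sum.inr (0 : Fin 2) ∈ FreeMonoid.toList m ∨ Sum.inr (1 : Fin 2) ∈ FreeMonoid.toList m with hP
      haveI : DecidablePred P := Classical.decPred _
      set gH : MonoidAlgebra F (FreeMonoid (X ⊕ Fin 2)) := MonoidAlgebra.ofCoeff (Finsupp.filter P g.coeff) with hgH
      set gL := g - gH with hgLdef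
      have hgHsupp : ∀ m ∈ gH.coeff.support, P m := by
        intro m hm; rw [hgH, MonoidAlgebra.coeff_ofCoeff, Finsupp.support_filter, Finset.mem_filter] at hm; exact hm.2
      have hgLsupp : ∀ m ∈ gL.coeff.support, ¬ P m := by
        intro m hm hPm
        apply Finsupp.mem_support_iff.mp hm
        rw [hgLdef, MonoidAlgebra.coeff_sub, Finsupp.sub_apply, hgH, MonoidAlgebra.coeff_ofCoeff, Finsupp.filter_apply_pos _ _ hPm, sub_self]
      have hgsum : gH + gL = g := by rw [hgLdef]; abel
      have heq' : f + y * z = gH * h + gL * h := by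
        rw [heq, ← hgsum, add_mul]
      have hfilt := congrArg (Finsupp.filter P) (congrArg MonoidAlgebra.coeff heq')
      rw [MonoidAlgebra.coeff_add, MonoidAlgebra.coeff_add, Finsupp.filter_add, Finsupp.filter_add] at hfilt
      rw [filter_eq_zero (P := P) (p := f) (fun m hm => by
            rintro (hc | hc)
            exacts [hfS m hm 0 hc, hfS m hm 1 hc])] at hfilt
      rw [filter_eq_self (P := P) (p := y * z) (fun m hm => by
            rw [hyz, MonoidAlgebra.coeff_single, Finsupp.support_single_ne_zero _ (one_ne_zero (α := F)),
              Finset.mem_singleton] at hm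
            subst hm
            exact Or.inl (by rw [hwl]; simp))] at hfilt
      rw [filter_eq_self (P := P) (p := gH * h)
          (mul_support_class hgHsupp (fun n _ => trivial) (fun m n hPm (_ : True) => by
            rcases hPm with hc | hc
            · exact Or.inl (by rw [toList_mul]; exact List.mem_append_left _ hc)
            · exact Or.inr (by rw [toList_mul]; exact List.mem_append_left _ hc)))] at hfilt
      rw [filter_eq_zero (P := P) (p := gL * h)
          (mul_support_class hgLsupp hhS (fun m n hPm hPn => by
            rintro (hc | hc) <;> rw [toList_mul, List.mem_append] at hc <;>
              rcases hc with hc | hc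
            · exact hPm (Or.inl hc)
            · exact hPn (Or.inl hc)
            · exact hPm (Or.inr hc)
            · exact hPn (Or.inr hc)))] at hfilt
      rw [zero_add, add_zero] at hfilt
      have hgHne : gH ≠ 0 := by
        obtain ⟨m, hm, hmy⟩ := hyg
        have : m ∈ gH.coeff.support := by
          rw [hgH, MonoidAlgebra.coeff_ofCoeff, Finsupp.support_filter, Finset.mem_filter]
          exact ⟨hm, Or.inl hmy⟩
        exact fun h0 => Finsupp.support_nonempty_iff.mp ⟨m, this⟩ (by rw [h0, MonoidAlgebra.coeff_zero])
      obtain ⟨m, hm, hml⟩ := exists_top hgHne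
      obtain ⟨n, hn, hnl⟩ := exists_top hh0
      have htop := top_coeff gH h hm hn hml.ge hnl.ge
      have hne : (gH * h).coeff (m * n) ≠ 0 := by
        rw [htop]
        exact mul_ne_zero (Finsupp.mem_support_iff.mp hm) (Finsupp.mem_support_iff.mp hn)
      rw [← hfilt, hyz, MonoidAlgebra.coeff_single] at hne
      have hmnw : m * n = w := (Finsupp.single_apply_ne_zero.mp hne).1
      have hlists : FreeMonoid.toList m ++ FreeMonoid.toList n =
          [Sum.inr 0, Sum.inr 1] := by rw [← toList_mul, hmnw, hwl]
      have hmne : FreeMonoid.toList m ≠ [] := by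
        rcases hgHsupp m hm with hc | hc <;> exact List.ne_nil_of_mem hc
      have hnne : FreeMonoid.toList n ≠ [] := by
        have hd : FreeMonoid.length n = deg h := hnl
        intro hc
        rw [len_def, hc] at hd
        simp at hd
        omega
      rcases split2 hlists with ⟨h1, h2⟩ | ⟨h1, h2⟩ | ⟨h1, h2⟩
      · exact hmne h1
      · exact hdisj _ hzg ⟨n, hn, by rw [h2]; simp⟩
      · exact hnne h2
    · -- y ∈ g, z ∈ h : main case, f = 0
      have hyh' : Sum.inr (0 : Fin 2) ∉ vars h := fun hc => hdisj _ hyg hc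
      have hzg' : Sum.inr (1 : Fin 2) ∉ vars g := fun hc => hdisj _ hc hzh
      set Py : FreeMonoid (X ⊕ Fin 2) → Prop :=
        fun m => Sum.inr (0 : Fin 2) ∈ FreeMonoid.toList m with hPy
      set Pz : FreeMonoid (X ⊕ Fin 2) → Prop :=
        fun m => Sum.inr (1 : Fin 2) ∈ FreeMonoid.toList m with hPz
      haveI : DecidablePred Py := Classical.decPred _
      haveI : DecidablePred Pz := Classical.decPred _
      set QB : FreeMonoid (X ⊕ Fin 2) → Prop := fun m => ¬ Py m ∧ Pz m with hQB
      set QA : FreeMonoid (X ⊕ Fin 2) → Prop := fun m => ¬ Py m ∧ ¬ Pz m with hQA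
      haveI : DecidablePred QB := Classical.decPred _
      haveI : DecidablePred QA := Classical.decPred _
      set g1 : MonoidAlgebra F (FreeMonoid (X ⊕ Fin 2)) := MonoidAlgebra.ofCoeff (Finsupp.filter Py g.coeff) with hg1
      set g0 := g - g1 with hg0def
      set h1 : MonoidAlgebra F (FreeMonoid (X ⊕ Fin 2)) := MonoidAlgebra.ofCoeff (Finsupp.filter Pz h.coeff) with hh1
      set h0 := h - h1 with hh0def
      have hg1supp : ∀ m ∈ g1.coeff.support, Py m ∧ ¬ Pz m := by
        intro m hm; rw [hg1, MonoidAlgebra.coeff_ofCoeff, Finsupp.support_filter, Finset.mem_filter] at hm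
        exact ⟨hm.2, fun hc => hzg' ⟨m, hm.1, hc⟩⟩
      have hg0supp : ∀ m ∈ g0.coeff.support, ¬ Py m ∧ ¬ Pz m := by
        intro m hm
        have hmg : m ∈ g.coeff.support := by
          by_contra hc
          apply Finsupp.mem_support_iff.mp hm
          have hgm : g.coeff m = 0 := Finsupp.notMem_support_iff.mp hc
          have : g1.coeff m = 0 := by
            by_cases hp : Py m
            · rw [hg1, MonoidAlgebra.coeff_ofCoeff, Finsupp.filter_apply_pos _ _ hp, hgm]
            · rw [hg1, MonoidAlgebra.coeff_ofCoeff, Finsupp.filter_apply_neg _ _ hp]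
          rw [hg0def, MonoidAlgebra.coeff_sub, Finsupp.sub_apply, hgm, this, sub_self]
        constructor
        · intro hPm
          apply Finsupp.mem_support_iff.mp hm
          rw [hg0def, MonoidAlgebra.coeff_sub, Finsupp.sub_apply, hg1, MonoidAlgebra.coeff_ofCoeff, Finsupp.filter_apply_pos _ _ hPm, sub_self]
        · exact fun hc => hzg' ⟨m, hmg, hc⟩
      have hh1supp : ∀ m ∈ h1.coeff.support, ¬ Py m ∧ Pz m := by
        intro m hm; rw [hh1, MonoidAlgebra.coeff_ofCoeff, Finsupp.support_filter, Finset.mem_filter] at hm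
        exact ⟨fun hc => hyh' ⟨m, hm.1, hc⟩, hm.2⟩
      have hh0supp : ∀ m ∈ h0.coeff.support, ¬ Py m ∧ ¬ Pz m := by
        intro m hm
        have hmh : m ∈ h.coeff.support := by
          by_contra hc
          apply Finsupp.mem_support_iff.mp hm
          have hhm : h.coeff m = 0 := Finsupp.notMem_support_iff.mp hc
          have : h1.coeff m = 0 := by
            by_cases hp : Pz m
            · rw [hh1, MonoidAlgebra.coeff_ofCoeff, Finsupp.filter_apply_pos _ _ hp, hhm]
            · rw [hh1, MonoidAlgebra.coeff_ofCoeff, Finsupp.filter_apply_neg _ _ hp]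
          rw [hh0def, MonoidAlgebra.coeff_sub, Finsupp.sub_apply, hhm, this, sub_self]
        constructor
        · exact fun hc => hyh' ⟨m, hmh, hc⟩
        · intro hPm
          apply Finsupp.mem_support_iff.mp hm
          rw [hh0def, MonoidAlgebra.coeff_sub, Finsupp.sub_apply, hh1, MonoidAlgebra.coeff_ofCoeff, Finsupp.filter_apply_pos _ _ hPm, sub_self]
      have hmulclass : ∀ (m n : FreeMonoid (X ⊕ Fin 2)) (j : Fin 2),
          (Sum.inr j ∈ FreeMonoid.toList (m * n)) ↔
          (Sum.inr j ∈ FreeMonoid.toList m ∨ Sum.inr j ∈ FreeMonoid.toList n) := by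
        intro m n j; rw [toList_mul, List.mem_append]
      have hgsum : g1 + g0 = g := by rw [hg0def]; abel
      have hhsum : h1 + h0 = h := by rw [hh0def]; abel
      have heq' : f + y * z = g1 * h1 + (g1 * h0 + (g0 * h1 + g0 * h0)) := by
        rw [heq, ← hgsum, ← hhsum, add_mul, mul_add, mul_add, add_assoc]
      -- filter at QB = (¬Py ∧ Pz) : gives 0 = g0 * h1
      have hfiltB := congrArg (Finsupp.filter QB) (congrArg MonoidAlgebra.coeff heq')
      rw [MonoidAlgebra.coeff_add, MonoidAlgebra.coeff_add, MonoidAlgebra.coeff_add, MonoidAlgebra.coeff_add, Finsupp.filter_add, Finsupp.filter_add, Finsupp.filter_add, Finsupp.filter_add] at hfiltB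
      rw [filter_eq_zero (P := QB) (p := f) (fun m hm => by
            rintro ⟨-, hc⟩; exact hfS m hm 1 hc)] at hfiltB
      rw [filter_eq_zero (P := QB) (p := y * z) (fun m hm => by
            rw [hyz, MonoidAlgebra.coeff_single, Finsupp.support_single_ne_zero _ (one_ne_zero (α := F)),
              Finset.mem_singleton] at hm
            subst hm
            rintro ⟨hc, -⟩; exact hc (by simp only [hPy, hwl]; simp))] at hfiltB
      rw [filter_eq_zero (P := QB) (p := g1 * h1)
          (mul_support_class hg1supp hh1supp (fun m n hm hn => by
            rintro ⟨hc, -⟩; exact hc ((hmulclass m n 0).mpr (Or.inl hm.1))))] at hfiltB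
      rw [filter_eq_zero (P := QB) (p := g1 * h0)
          (mul_support_class hg1supp hh0supp (fun m n hm hn => by
            rintro ⟨hc, -⟩; exact hc ((hmulclass m n 0).mpr (Or.inl hm.1))))] at hfiltB
      rw [filter_eq_self (P := QB) (p := g0 * h1)
          (mul_support_class hg0supp hh1supp (fun m n hm hn => by
            constructor
            · intro hc
              rcases (hmulclass m n 0).mp hc with hc | hc
              exacts [hm.1 hc, hn.1 hc]
            · exact (hmulclass m n 1).mpr (Or.inr hn.2)))] at hfiltB
      rw [filter_eq_zero (P := QB) (p := g0 * h0)
          (mul_support_class hg0supp hh0supp (fun m n hm hn => by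
            rintro ⟨-, hc⟩
            rcases (hmulclass m n 1).mp hc with hc | hc
            exacts [hm.2 hc, hn.2 hc]))] at hfiltB
      simp only [add_zero, zero_add] at hfiltB
      -- filter at QA = (¬Py ∧ ¬Pz) : gives f = g0 * h0
      have hfiltA := congrArg (Finsupp.filter QA) (congrArg MonoidAlgebra.coeff heq')
      rw [MonoidAlgebra.coeff_add, MonoidAlgebra.coeff_add, MonoidAlgebra.coeff_add, MonoidAlgebra.coeff_add, Finsupp.filter_add, Finsupp.filter_add, Finsupp.filter_add, Finsupp.filter_add] at hfiltA
      rw [filter_eq_self (P := QA) (p := f) (fun m hm =>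
            ⟨fun hc => hfS m hm 0 hc, fun hc => hfS m hm 1 hc⟩)] at hfiltA
      rw [filter_eq_zero (P := QA) (p := y * z) (fun m hm => by
            rw [hyz, MonoidAlgebra.coeff_single, Finsupp.support_single_ne_zero _ (one_ne_zero (α := F)),
              Finset.mem_singleton] at hm
            subst hm
            rintro ⟨hc, -⟩; exact hc (by simp only [hPy, hwl]; simp))] at hfiltA
      rw [filter_eq_zero (P := QA) (p := g1 * h1)
          (mul_support_class hg1supp hh1supp (fun m n hm hn => by
            rintro ⟨hc, -⟩; exact hc ((hmulclass m n 0).mpr (Or.inl hm.1))))] at hfiltA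
      rw [filter_eq_zero (P := QA) (p := g1 * h0)
          (mul_support_class hg1supp hh0supp (fun m n hm hn => by
            rintro ⟨hc, -⟩; exact hc ((hmulclass m n 0).mpr (Or.inl hm.1))))] at hfiltA
      rw [filter_eq_zero (P := QA) (p := g0 * h1)
          (mul_support_class hg0supp hh1supp (fun m n hm hn => by
            rintro ⟨-, hc⟩; exact hc ((hmulclass m n 1).mpr (Or.inr hn.2))))] at hfiltA
      rw [filter_eq_self (P := QA) (p := g0 * h0)
          (mul_support_class hg0supp hh0supp (fun m n hm hn => by
            constructor
            · intro hc
              rcases (hmulclass m n 0).mp hc with hc | hc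
              exacts [hm.1 hc, hn.1 hc]
            · intro hc
              rcases (hmulclass m n 1).mp hc with hc | hc
              exacts [hm.2 hc, hn.2 hc]))] at hfiltA
      simp only [add_zero, zero_add] at hfiltA
      have hh1ne : h1 ≠ 0 := by
        obtain ⟨n, hn, hnz⟩ := hzh
        have : n ∈ h1.coeff.support := by
          rw [hh1, MonoidAlgebra.coeff_ofCoeff, Finsupp.support_filter, Finset.mem_filter]
          exact ⟨hn, hnz⟩
        exact fun h0 => Finsupp.support_nonempty_iff.mp ⟨n, this⟩ (by rw [h0, MonoidAlgebra.coeff_zero])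
      have hg0_eq : g0 = 0 := by
        by_contra hc
        exact mul_ne_zero' _ _ hc hh1ne (MonoidAlgebra.coeff_eq_zero.mp hfiltB.symm)
      rw [← MonoidAlgebra.coeff_eq_zero, hfiltA, hg0_eq, zero_mul, MonoidAlgebra.coeff_zero]
    · -- y ∈ h, z ∈ g : contradiction from the factorization of w
      exfalso
      rcases hsplit0 with ⟨h1, h2⟩ | ⟨h1, h2⟩ | ⟨h1, h2⟩
      · exact hdisj _ hzg ⟨n0, hn0, by rw [h2]; simp⟩
      · exact hdisj _ ⟨m0, hm0, by rw [h1]; simp⟩ hyh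
      · exact hdisj _ ⟨m0, hm0, by rw [h1]; simp⟩ hyh
    · -- y ∈ h, z ∈ h : contradiction by degrees (mirror of first case)
      exfalso
      have hyg' : Sum.inr (0 : Fin 2) ∉ vars g := fun hc => hdisj _ hc hyh
      have hzg' : Sum.inr (1 : Fin 2) ∉ vars g := fun hc => hdisj _ hc hzh
      have hgS : ∀ n ∈ g.coeff.support, ¬ (Sum.inr (0 : Fin 2) ∈ FreeMonoid.toList n ∨
          Sum.inr (1 : Fin 2) ∈ FreeMonoid.toList n) := by
        rintro n hn (hc | hc)
        exacts [hyg' ⟨n, hn, hc⟩, hzg' ⟨n, hn, hc⟩]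
      set P : FreeMonoid (X ⊕ Fin 2) → Prop := fun m =>
        Sum.inr (0 : Fin 2) ∈ FreeMonoid.toList m ∨ Sum.inr (1 : Fin 2) ∈ FreeMonoid.toList m with hP
      haveI : DecidablePred P := Classical.decPred _
      set hH : MonoidAlgebra F (FreeMonoid (X ⊕ Fin 2)) := MonoidAlgebra.ofCoeff (Finsupp.filter P h.coeff) with hhH
      set hL := h - hH with hhLdef
      have hhHsupp : ∀ m ∈ hH.coeff.support, P m := by
        intro m hm; rw [hhH, MonoidAlgebra.coeff_ofCoeff, Finsupp.support_filter, Finset.mem_filter] at hm; exact hm.2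
      have hhLsupp : ∀ m ∈ hL.coeff.support, ¬ P m := by
        intro m hm hPm
        apply Finsupp.mem_support_iff.mp hm
        rw [hhLdef, MonoidAlgebra.coeff_sub, Finsupp.sub_apply, hhH, MonoidAlgebra.coeff_ofCoeff, Finsupp.filter_apply_pos _ _ hPm, sub_self]
      have hhsum : hH + hL = h := by rw [hhLdef]; abel
      have heq' : f + y * z = g * hH + g * hL := by
        rw [heq, ← hhsum, mul_add]
      have hfilt := congrArg (Finsupp.filter P) (congrArg MonoidAlgebra.coeff heq')
      rw [MonoidAlgebra.coeff_add, MonoidAlgebra.coeff_add, Finsupp.filter_add, Finsupp.filter_add] at hfilt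
      rw [filter_eq_zero (P := P) (p := f) (fun m hm => by
            rintro (hc | hc)
            exacts [hfS m hm 0 hc, hfS m hm 1 hc])] at hfilt
      rw [filter_eq_self (P := P) (p := y * z) (fun m hm => by
            rw [hyz, MonoidAlgebra.coeff_single, Finsupp.support_single_ne_zero _ (one_ne_zero (α := F)),
              Finset.mem_singleton] at hm
            subst hm
            exact Or.inl (by rw [hwl]; simp))] at hfilt
      rw [filter_eq_self (P := P) (p := g * hH)
          (mul_support_class (fun n _ => trivial) hhHsupp (fun m n (_ : True) hPn => by
            rcases hPn with hc | hc
            · exact Or.inl (by rw [toList_mul]; exact List.mem_append_right _ hc)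
            · exact Or.inr (by rw [toList_mul]; exact List.mem_append_right _ hc)))] at hfilt
      rw [filter_eq_zero (P := P) (p := g * hL)
          (mul_support_class hgS hhLsupp (fun m n hPm hPn => by
            rintro (hc | hc) <;> rw [toList_mul, List.mem_append] at hc <;>
              rcases hc with hc | hc
            · exact hPm (Or.inl hc)
            · exact hPn (Or.inl hc)
            · exact hPm (Or.inr hc)
            · exact hPn (Or.inr hc)))] at hfilt
      rw [zero_add, add_zero] at hfilt
      have hhHne : hH ≠ 0 := by
        obtain ⟨m, hm, hmy⟩ := hyh
        have : m ∈ hH.coeff.support := by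
          rw [hhH, MonoidAlgebra.coeff_ofCoeff, Finsupp.support_filter, Finset.mem_filter]
          exact ⟨hm, Or.inl hmy⟩
        exact fun h0 => Finsupp.support_nonempty_iff.mp ⟨m, this⟩ (by rw [h0, MonoidAlgebra.coeff_zero])
      obtain ⟨m, hm, hml⟩ := exists_top hg0
      obtain ⟨n, hn, hnl⟩ := exists_top hhHne
      have htop := top_coeff g hH hm hn hml.ge hnl.ge
      have hne : (g * hH).coeff (m * n) ≠ 0 := by
        rw [htop]
        exact mul_ne_zero (Finsupp.mem_support_iff.mp hm) (Finsupp.mem_support_iff.mp hn)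
      rw [← hfilt, hyz, MonoidAlgebra.coeff_single] at hne
      have hmnw : m * n = w := (Finsupp.single_apply_ne_zero.mp hne).1
      have hlists : FreeMonoid.toList m ++ FreeMonoid.toList n =
          [Sum.inr 0, Sum.inr 1] := by rw [← toList_mul, hmnw, hwl]
      have hnne : FreeMonoid.toList n ≠ [] := by
        rcases hhHsupp n hn with hc | hc <;> exact List.ne_nil_of_mem hc
      have hmne : FreeMonoid.toList m ≠ [] := by
        have hd : FreeMonoid.length m = deg g := hml
        intro hc
        rw [len_def, hc] at hd
        simp at hd
        omega
      rcases split2 hlists with ⟨h1, h2⟩ | ⟨h1, h2⟩ | ⟨h1, h2⟩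
      · exact hmne h1
      · exact hdisj _ ⟨m, hm, by rw [h1]; simp⟩ hyh
      · exact hnne h2

theorem stmt12 {F X : Type} [Field F] (f : MonoidAlgebra F (FreeMonoid (X ⊕ Fin 2)))
    (hfX : vars f ⊆ Set.range Sum.inl) :
    let y : MonoidAlgebra F (FreeMonoid (X ⊕ Fin 2)) :=
      MonoidAlgebra.of F (FreeMonoid (X ⊕ Fin 2)) (FreeMonoid.of (Sum.inr 0))
    let z : MonoidAlgebra F (FreeMonoid (X ⊕ Fin 2)) :=
      MonoidAlgebra.of F (FreeMonoid (X ⊕ Fin 2)) (FreeMonoid.of (Sum.inr 1))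
    (f = 0 ↔ ∃ g h : MonoidAlgebra F (FreeMonoid (X ⊕ Fin 2)),
        f + y * z = g * h ∧ 0 < deg g ∧ 0 < deg h ∧ vars g ∩ vars h = ∅) := stmt12' f hfX

end Main
end Main
end

section
/- Let f ∈ F⟨X⟩ be homogeneous of degree d = d_1 + d_2 and let A_f be the matrix whose rows are indexed by degree-d_1 monomials, columns by degree-d_2 monomials, with entry A_f(m, m') equal to the coefficient of m·m' in f. Then f can be written as f = Σ_{i=1}^{k} g_i·h_i with each g_i homogeneous of degree d_1 and each h_i homogeneous of degree d_2 if and only if the rank of A_f is at most k. -/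
/-- The partial-derivative (coefficient) matrix of `f`: rows are indexed by degree-`d1`
monomials (as functions `Fin d1 → X`), columns by degree-`d2` monomials, and the entry
at `(m, m')` is the coefficient of the word `m * m'` in `f`. -/
noncomputable def Amat {F X : Type} [Field F] (d1 d2 : Nat)
    (f : MonoidAlgebra F (FreeMonoid X)) : Matrix (Fin d1 → X) (Fin d2 → X) F :=
  Matrix.of fun v w => f.coeff (FreeMonoid.ofList (List.ofFn v ++ List.ofFn w))

namespace Matrix

variable {R m n : Type*}

theorem exists_mul_eq_of_rank_le [Field R] {k : ℕ} [Fintype n] (M : Matrix m n R)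
    (hk : M.rank ≤ k) : ∃ (B : Matrix m (Fin k) R) (C : Matrix (Fin k) n R), M = B * C := by
  classical
  -- `M` factors through its column space `V`, which embeds into `Fin k → R` with a left inverse.
  let V := LinearMap.range M.mulVecLin
  obtain ⟨φ, hφ⟩ : ∃ φ : V →ₗ[R] (Fin k → R), Function.Injective φ :=
    finrank_le_iff_exists_linearMap.mp (by simpa [Matrix.rank] using hk)
  obtain ⟨θ, hθ⟩ := φ.exists_leftInverse_of_injective (LinearMap.ker_eq_bot.mpr hφ)
  refine ⟨LinearMap.toMatrix' (V.subtype ∘ₗ θ),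
    LinearMap.toMatrix' (φ ∘ₗ M.mulVecLin.rangeRestrict), ?_⟩
  rw [← LinearMap.toMatrix'_comp, LinearMap.comp_assoc, ← LinearMap.comp_assoc _ φ θ, hθ,
    LinearMap.id_comp]
  exact (LinearMap.toMatrix'_toLin' M).symm

theorem sum_vecMulVec_eq_transpose_mul [NonUnitalCommSemiring R] {ι : Type*} [Fintype ι]
    (u : Matrix ι m R) (w : Matrix ι n R) : ∑ i, vecMulVec (u i) (w i) = uᵀ * w := by
  ext a b
  simp [Matrix.sum_apply, Matrix.mul_apply, vecMulVec_apply]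

theorem rank_le_iff_exists_sum_vecMulVec [Field R] {k : ℕ} [Fintype n] (M : Matrix m n R) :
    M.rank ≤ k ↔
      ∃ (u : Matrix (Fin k) m R) (w : Matrix (Fin k) n R), M = ∑ i, vecMulVec (u i) (w i) := by
  constructor
  · intro hk
    obtain ⟨B, C, rfl⟩ := exists_mul_eq_of_rank_le M hk
    exact ⟨Bᵀ, C, by rw [sum_vecMulVec_eq_transpose_mul, transpose_transpose]⟩
  · rintro ⟨u, w, rfl⟩
    rw [sum_vecMulVec_eq_transpose_mul]
    exact (rank_mul_le_left _ _).trans ((rank_le_card_width _).trans_eq (Fintype.card_fin k))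

end Matrix

namespace FreeMonoid

variable {X : Type*}

def ofFn {d : ℕ} (v : Fin d → X) : FreeMonoid X := ofList (List.ofFn v)

theorem ofFn_injective {d : ℕ} : Function.Injective (ofFn : (Fin d → X) → FreeMonoid X) :=
  fun _ _ h => List.ofFn_injective (congrArg toList h)

@[simp]
theorem length_ofFn {d : ℕ} (v : Fin d → X) : (ofFn v).length = d := List.length_ofFn

theorem exists_ofFn_of_length {d : ℕ} {m : FreeMonoid X} (hm : m.length = d) :
    ∃ v : Fin d → X, ofFn v = m := by
  subst hm
  exact ⟨fun i => m.toList[i], List.ofFn_getElem⟩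

theorem ofFn_appendEquiv {d₁ d₂ : ℕ} (p : (Fin d₁ → X) × (Fin d₂ → X)) :
    ofFn (Fin.appendEquiv d₁ d₂ p) = ofFn p.1 * ofFn p.2 := by
  rw [ofFn, ofFn, ofFn, ← ofList_append, ← List.ofFn_fin_append]
  rfl

theorem ofFn_mul_ofFn_injective {d₁ d₂ : ℕ} :
    Function.Injective fun p : (Fin d₁ → X) × (Fin d₂ → X) => ofFn p.1 * ofFn p.2 := by
  intro p q h
  apply (Fin.appendEquiv d₁ d₂).injective
  apply ofFn_injective
  simpa only [ofFn_appendEquiv] using h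

end FreeMonoid

open FreeMonoid
open MonoidAlgebra (single single_mul_single singleAddHom)

theorem MonoidAlgebra.coeff_sum_single_of_injective {R M ι : Type*} [Semiring R] [Fintype ι]
    {e : ι → M} (he : Function.Injective e) (c : ι → R) (i : ι) :
    (∑ j, single (e j) (c j)).coeff (e i) = c i := by
  classical
  simp [Finsupp.single_apply, he.eq_iff]

section Coefficients

variable {F X : Type} [Field F]

theorem Amat_apply (d1 d2 : ℕ) (f : MonoidAlgebra F (FreeMonoid X)) (v : Fin d1 → X)
    (w : Fin d2 → X) : Amat d1 d2 f v w = f.coeff (ofFn v * ofFn w) := rfl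

theorem Amat_sum {ι : Type*} (s : Finset ι) (t : ι → MonoidAlgebra F (FreeMonoid X))
    (d1 d2 : ℕ) :
    Amat d1 d2 (∑ i ∈ s, t i) = ∑ i ∈ s, Amat d1 d2 (t i) := by
  ext v w
  simp [Amat_apply, Matrix.sum_apply]

variable [Fintype X]

noncomputable def ofCoeffs (d : ℕ) (c : (Fin d → X) → F) : MonoidAlgebra F (FreeMonoid X) :=
  ∑ v, single (ofFn v) (c v)

theorem coeff_ofCoeffs_ofFn {d : ℕ} (c : (Fin d → X) → F) (v : Fin d → X) :
    (ofCoeffs d c).coeff (ofFn v) = c v :=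
  MonoidAlgebra.coeff_sum_single_of_injective ofFn_injective c v

theorem homog_ofCoeffs (d : ℕ) (c : (Fin d → X) → F) : Homog (ofCoeffs d c) d := by
  intro m hm
  obtain ⟨v, -, hv⟩ := Finsupp.mem_support_finsetSum m (by simpa [ofCoeffs] using hm)
  rw [Finset.mem_singleton.mp (Finsupp.support_single_subset hv), length_ofFn]

theorem Homog.eq_ofCoeffs {d : ℕ} {f : MonoidAlgebra F (FreeMonoid X)} (hf : Homog f d) :
    f = ofCoeffs d (fun v => f.coeff (ofFn v)) := by
  ext m
  by_cases hm : m.length = d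
  · obtain ⟨v, rfl⟩ := exists_ofFn_of_length hm
    rw [coeff_ofCoeffs_ofFn]
  · have coeff_eq_zero : ∀ {g : MonoidAlgebra F (FreeMonoid X)}, Homog g d → g.coeff m = 0 :=
      fun hg => Finsupp.notMem_support_iff.mp fun h => hm (hg m h)
    rw [coeff_eq_zero hf, coeff_eq_zero (homog_ofCoeffs d _)]

noncomputable def ofMatrix {d1 d2 : ℕ} (M : Matrix (Fin d1 → X) (Fin d2 → X) F) :
    MonoidAlgebra F (FreeMonoid X) :=
  ∑ p : (Fin d1 → X) × (Fin d2 → X), single (ofFn p.1 * ofFn p.2) (M p.1 p.2)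

theorem Amat_ofMatrix {d1 d2 : ℕ} (M : Matrix (Fin d1 → X) (Fin d2 → X) F) :
    Amat d1 d2 (ofMatrix M) = M := by
  ext v w
  exact MonoidAlgebra.coeff_sum_single_of_injective ofFn_mul_ofFn_injective
    (fun p => M p.1 p.2) (v, w)

theorem ofMatrix_Amat {d1 d2 : ℕ} {f : MonoidAlgebra F (FreeMonoid X)}
    (hf : Homog f (d1 + d2)) : ofMatrix (Amat d1 d2 f) = f := by
  conv_rhs => rw [hf.eq_ofCoeffs, ofCoeffs, ← (Fin.appendEquiv d1 d2).sum_comp]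
  simp only [ofMatrix, Amat_apply, ofFn_appendEquiv]

theorem ofMatrix_sum {d1 d2 : ℕ} {ι : Type*} (s : Finset ι)
    (M : ι → Matrix (Fin d1 → X) (Fin d2 → X) F) :
    ofMatrix (∑ i ∈ s, M i) = ∑ i ∈ s, ofMatrix (M i) := by
  simp only [ofMatrix, Matrix.sum_apply]
  rw [Finset.sum_comm]
  exact Finset.sum_congr rfl fun p _ => map_sum (singleAddHom _) _ _

theorem ofMatrix_vecMulVec {d1 d2 : ℕ} (c₁ : (Fin d1 → X) → F) (c₂ : (Fin d2 → X) → F) :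
    ofMatrix (Matrix.vecMulVec c₁ c₂) = ofCoeffs d1 c₁ * ofCoeffs d2 c₂ := by
  simp only [ofMatrix, ofCoeffs, Finset.sum_mul_sum, single_mul_single, Matrix.vecMulVec_apply,
    Fintype.sum_prod_type]

theorem Amat_mul_of_homog {d1 d2 : ℕ} {g h : MonoidAlgebra F (FreeMonoid X)} (hg : Homog g d1)
    (hh : Homog h d2) :
    Amat d1 d2 (g * h) =
      Matrix.vecMulVec (fun v => g.coeff (ofFn v)) (fun w => h.coeff (ofFn w)) := by
  rw [← Amat_ofMatrix (Matrix.vecMulVec _ _), ofMatrix_vecMulVec, ← hg.eq_ofCoeffs,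
    ← hh.eq_ofCoeffs]

end Coefficients

theorem stmt13_general {F X : Type} [Field F] [Fintype X]
    (d1 d2 k : Nat) (f : MonoidAlgebra F (FreeMonoid X)) (hf : Homog f (d1 + d2)) :
    (∃ g h : Fin k → MonoidAlgebra F (FreeMonoid X),
        (∀ i, Homog (g i) d1 ∧ Homog (h i) d2) ∧ f = ∑ i, g i * h i) ↔
      (Amat d1 d2 f).rank ≤ k := by
  rw [Matrix.rank_le_iff_exists_sum_vecMulVec]
  constructor
  · rintro ⟨g, h, hgh, rfl⟩
    refine ⟨fun i v => (g i).coeff (ofFn v), fun i w => (h i).coeff (ofFn w), ?_⟩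
    rw [Amat_sum]
    exact Finset.sum_congr rfl fun i _ => Amat_mul_of_homog (hgh i).1 (hgh i).2
  · rintro ⟨u, w, hM⟩
    refine ⟨fun i => ofCoeffs d1 (u i), fun i => ofCoeffs d2 (w i),
      fun i => ⟨homog_ofCoeffs d1 (u i), homog_ofCoeffs d2 (w i)⟩, ?_⟩
    rw [← ofMatrix_Amat hf, hM, ofMatrix_sum]
    exact Finset.sum_congr rfl fun i _ => ofMatrix_vecMulVec (u i) (w i)

theorem stmt13 {F X : Type} [Field F] [Fintype X] [DecidableEq X]
    (d1 d2 k : Nat) (f : MonoidAlgebra F (FreeMonoid X)) (hf : Homog f (d1 + d2)) :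
    (∃ g h : Fin k → MonoidAlgebra F (FreeMonoid X),
        (∀ i, Homog (g i) d1 ∧ Homog (h i) d2) ∧ f = ∑ i, g i * h i) ↔
      (Amat d1 d2 f).rank ≤ k :=
  stmt13_general d1 d2 k f hf
end
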